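/- Restricting the autocrat's actions lowers the maximum fixed point: suppose X'_s ⊆ X_s is nonempty for every s ∈ S, M : S → ℝ is a fixed point of the max–min operator built from the action sets X_s, and M' : S → ℝ is a fixed point of the max–min operator built from the restricted sets X'_s (with the same Y, T, U, λ). Then M'(s) ≤ M(s) for all s ∈ S. -/
import Mathlib


/-- The Bellman min–max operator built from a family `Z` of autocrat action sets:
`s ↦ min_{x ∈ Z s} max_{y ∈ Y s} (λ·m(T(x,y;s)) + (1−λ)·U(x,y;s))`. -/
noncomputable def bellmanMinMaxOn {S : Type*} (X Y : S → Type*)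
    [∀ s, Fintype (X s)] [∀ s, Fintype (Y s)] [∀ s, Nonempty (Y s)]
    (T : ∀ s, X s → Y s → S) (U : ∀ s, X s → Y s → ℝ) (lam : ℝ)
    (Z : ∀ s, Finset (X s)) (hZ : ∀ s, (Z s).Nonempty)
    (m : S → ℝ) (s : S) : ℝ :=
  (Z s).inf' (hZ s) fun x =>
    Finset.univ.sup' Finset.univ_nonempty fun y : Y s =>
      lam * m (T s x y) + (1 - lam) * U s x y

/-- The Bellman max–min operator built from a family `Z` of autocrat action sets:
`s ↦ max_{x ∈ Z s} min_{y ∈ Y s} (λ·M(T(x,y;s)) + (1−λ)·U(x,y;s))`. -/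
noncomputable def bellmanMaxMinOn {S : Type*} (X Y : S → Type*)
    [∀ s, Fintype (X s)] [∀ s, Fintype (Y s)] [∀ s, Nonempty (Y s)]
    (T : ∀ s, X s → Y s → S) (U : ∀ s, X s → Y s → ℝ) (lam : ℝ)
    (Z : ∀ s, Finset (X s)) (hZ : ∀ s, (Z s).Nonempty)
    (M : S → ℝ) (s : S) : ℝ :=
  (Z s).sup' (hZ s) fun x =>
    Finset.univ.inf' Finset.univ_nonempty fun y : Y s =>
      lam * M (T s x y) + (1 - lam) * U s x y

/-- Restricting the autocrat's actions lowers the maximum fixed point: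
if `M` is a fixed point of the max–min operator built from the full action sets `X s`
and `M'` is a fixed point of the max–min operator built from nonempty subsets `X' s`,
then `M' ≤ M` pointwise. -/
theorem restriction_lowers_max_fixed_point
    {S : Type*} [Fintype S] [Nonempty S]
    (X Y : S → Type*)
    [∀ s, Fintype (X s)] [∀ s, Nonempty (X s)]
    [∀ s, Fintype (Y s)] [∀ s, Nonempty (Y s)]
    (T : ∀ s, X s → Y s → S) (U : ∀ s, X s → Y s → ℝ)
    (lam : ℝ) (hlam : lam ∈ Set.Ioo (0 : ℝ) 1)
    (X' : ∀ s, Finset (X s)) (hX' : ∀ s, (X' s).Nonempty)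
    (M M' : S → ℝ)
    (hM : ∀ s, M s = bellmanMaxMinOn X Y T U lam
      (fun s => (Finset.univ : Finset (X s))) (fun _ => Finset.univ_nonempty) M s)
    (hM' : ∀ s, M' s = bellmanMaxMinOn X Y T U lam X' hX' M' s) :
    ∀ s, M' s ≤ M s := by

  -- Let d be the max of M' - M over states
  set d := Finset.univ.sup' Finset.univ_nonempty (fun s : S => M' s - M s) with hd
  have key : ∀ s, M' s - M s ≤ d := by
    intro s
    rw [hd]
    exact Finset.le_sup' (fun s : S => M' s - M s) (Finset.mem_univ s)
  obtain ⟨s0, _, hs0⟩ := Finset.exists_mem_eq_sup' (Finset.univ_nonempty)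
    (fun s : S => M' s - M s)
  -- Claim: d ≤ lam * d
  have hdle : d ≤ lam * d := by
    rw [hd, hs0]
    -- pick maximizer x* ∈ X' s0 achieving M' s0
    have hM's0 := hM' s0
    unfold bellmanMaxMinOn at hM's0
    obtain ⟨x, hx, hxeq⟩ := Finset.exists_mem_eq_sup' (hX' s0)
      (fun x => Finset.univ.inf' Finset.univ_nonempty fun y : Y s0 =>
        lam * M' (T s0 x y) + (1 - lam) * U s0 x y)
    have h1 : M' s0 = Finset.univ.inf' Finset.univ_nonempty fun y : Y s0 =>
        lam * M' (T s0 x y) + (1 - lam) * U s0 x y := by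
      rw [hM's0, hxeq]
    have h2 : (Finset.univ.inf' Finset.univ_nonempty fun y : Y s0 =>
        lam * M (T s0 x y) + (1 - lam) * U s0 x y) ≤ M s0 := by
      rw [hM s0]
      unfold bellmanMaxMinOn
      exact Finset.le_sup' (fun x => Finset.univ.inf' Finset.univ_nonempty fun y : Y s0 =>
        lam * M (T s0 x y) + (1 - lam) * U s0 x y) (Finset.mem_univ x)
    have h3 : (Finset.univ.inf' Finset.univ_nonempty fun y : Y s0 =>
        lam * M' (T s0 x y) + (1 - lam) * U s0 x y)
        ≤ (Finset.univ.inf' Finset.univ_nonempty fun y : Y s0 =>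
        lam * M (T s0 x y) + (1 - lam) * U s0 x y) + lam * d := by
      rw [Finset.inf'_le_iff]
      obtain ⟨y, _, hy⟩ := Finset.exists_mem_eq_inf' (Finset.univ_nonempty)
        (fun y : Y s0 => lam * M (T s0 x y) + (1 - lam) * U s0 x y)
      refine ⟨y, Finset.mem_univ y, ?_⟩
      rw [hy]
      have := key (T s0 x y)
      nlinarith [hlam.1]
    have hds : d = M' s0 - M s0 := hd.trans hs0
    rw [hds] at h3
    linarith
  have : d ≤ 0 := by nlinarith [hlam.2]
  intro s
  have := key s
  linarith
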